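/- lim_{q→∞} sup{ (1/‖y‖)·min_{1≤k≤q−1} ⟨y, z_k^q⟩ : y ∈ M̃_≤^{q−1}, y ≠ 0 } = 0. Equivalently, for every sequence {y^q} of nonzero vectors with y^q ∈ M̃_≤^{q−1}, the largest empty cap angular discrepancy A^{q−2}(Π(y^q)) = arccos((1/‖y^q‖)·min_{1≤k≤q−1} ⟨y^q, z_k^q⟩) converges to π/2 as q → ∞; hence no asymptotically permutation-dense sequence of configurations exists. -/

import Mathlib

open MeasureTheory Filter

/-- The unit vector `z_k^q ∈ ℝ^q` whose first `k` coordinates equal `-√((q-k)/(qk))` and whose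
last `q-k` coordinates equal `√(k/(q(q-k)))`. -/
noncomputable def zvec (q k : ℕ) : EuclideanSpace ℝ (Fin q) := WithLp.toLp 2 (fun i : Fin q =>
  if (i : ℕ) < k then -Real.sqrt (((q : ℝ) - k) / (q * k))
  else Real.sqrt ((k : ℝ) / (q * ((q : ℝ) - k))))

namespace Stmt17Aux

open Finset

lemma prefix_nonpos {q m : ℕ} {g : ℕ → ℝ}
    (hmono : ∀ i j, i ≤ j → j < q → g i ≤ g j)
    (hsum : ∑ i ∈ Finset.range q, g i = 0) (hm : m ≤ q) :
    ∑ i ∈ Finset.range m, g i ≤ 0 := by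
  rcases eq_or_lt_of_le hm with rfl | hmq
  · exact le_of_eq hsum
  by_contra h
  push_neg at h
  have h0 : ∑ i ∈ Finset.range m, (0:ℝ) < ∑ i ∈ Finset.range m, g i := by simpa using h
  obtain ⟨i, hi, hgi⟩ := Finset.exists_lt_of_sum_lt h0
  have hsplit := Finset.sum_range_add_sum_Ico g hm
  have hico : ∑ i ∈ Finset.Ico m q, g i = - ∑ i ∈ Finset.range m, g i := by
    rw [hsum] at hsplit; linarith
  have hpos : 0 < ∑ i ∈ Finset.Ico m q, g i := by
    apply Finset.sum_pos
    · intro j hj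
      rw [Finset.mem_Ico] at hj
      exact lt_of_lt_of_le hgi
        (hmono i j (le_trans (Finset.mem_range.mp hi).le hj.1) hj.2)
    · exact ⟨m, Finset.mem_Ico.mpr ⟨le_refl m, hmq⟩⟩
  rw [hico] at hpos
  linarith

lemma sqrt_add_aux {Q M : ℝ} (hM : 0 < M) (hQM : M < Q) :
    Real.sqrt ((Q - M)/(Q * M)) + Real.sqrt (M/(Q * (Q - M))) = Real.sqrt (Q/(M * (Q - M))) := by
  have hQ : 0 < Q := hM.trans hQM
  have hd : 0 < Q - M := sub_pos.mpr hQM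
  have ha : Real.sqrt ((Q - M)/(Q * M)) ^ 2 = (Q - M)/(Q * M) := Real.sq_sqrt (by positivity)
  have hb : Real.sqrt (M/(Q * (Q - M))) ^ 2 = M/(Q * (Q - M)) := Real.sq_sqrt (by positivity)
  have hab : Real.sqrt ((Q - M)/(Q * M)) * Real.sqrt (M/(Q * (Q - M))) = 1/Q := by
    rw [← Real.sqrt_mul (by positivity)]
    rw [show (Q - M)/(Q * M) * (M/(Q * (Q - M))) = (1/Q)^2 by field_simp]
    exact Real.sqrt_sq (by positivity)
  have hs : (Real.sqrt ((Q - M)/(Q * M)) + Real.sqrt (M/(Q * (Q - M)))) ^ 2 = Q/(M * (Q - M)) := by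
    have hr : ∀ x z : ℝ, (x + z)^2 = x^2 + 2*(x*z) + z^2 := fun x z => by ring
    rw [hr, ha, hb, hab]
    field_simp
    ring
  rw [← hs, Real.sqrt_sq (by positivity)]

set_option maxHeartbeats 1000000 in
lemma keyAbstract (ε : ℝ) (hε : 0 < ε) :
    ∃ Q : ℕ, 2 ≤ Q ∧ ∀ q : ℕ, Q ≤ q → ∀ g : ℕ → ℝ,
      (∀ i j, i ≤ j → j < q → g i ≤ g j) → (∑ i ∈ Finset.range q, g i = 0) →
      ∀ N : ℝ, 0 < N → N ^ 2 = ∑ i ∈ Finset.range q, (g i) ^ 2 →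
      ∃ m : ℕ, 1 ≤ m ∧ m ≤ q - 1 ∧
        (-∑ i ∈ Finset.range m, g i) * Real.sqrt ((q : ℝ) / ((m : ℝ) * ((q:ℝ) - (m:ℝ)))) ≤ ε * N := by
  obtain ⟨r, hr2, hrε⟩ : ∃ r : ℕ, 2 ≤ r ∧ 8 ≤ ε ^ 2 * r := by
    refine ⟨⌈8 / ε ^ 2⌉₊ + 2, Nat.le_add_left 2 _, ?_⟩
    have h1 : 8 / ε ^ 2 ≤ ((⌈8 / ε ^ 2⌉₊ + 2 : ℕ) : ℝ) := by
      refine le_trans (Nat.le_ceil _) ?_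
      exact_mod_cast Nat.le_add_right _ 2
    have hε2 : (0:ℝ) < ε ^ 2 := by positivity
    calc (8:ℝ) = ε^2 * (8 / ε^2) := by field_simp
    _ ≤ ε^2 * _ := mul_le_mul_of_nonneg_left h1 hε2.le
  have hrr1 : 1 ≤ r ^ r := Nat.one_le_pow _ _ (by omega)
  refine ⟨2 * r ^ r, by omega, ?_⟩
  intro q hq g hmono hsum N hN hN2
  by_contra hcon
  push_neg at hcon
  have hq2 : 2 ≤ q := le_trans (by omega) hq
  set P : ℕ → ℝ := fun m => ∑ i ∈ Finset.range m, g i with hP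
  set S : ℕ → ℝ := fun m => ∑ i ∈ Finset.range m, (g i)^2 with hS
  have hPle : ∀ m, m ≤ q → P m ≤ 0 := fun m hm => prefix_nonpos hmono hsum hm
  have hSmono : ∀ m k : ℕ, m ≤ k → S m ≤ S k := by
    intro m k hmk
    apply Finset.sum_le_sum_of_subset_of_nonneg (Finset.range_subset_range.mpr hmk)
    intro i _ _; positivity
  have hSN : ∀ m, m ≤ q → S m ≤ N ^ 2 := fun m hm => hN2 ▸ hSmono m q hm
  have hCS : ∀ m k : ℕ, m ≤ k → (P k - P m) ^ 2 ≤ ((k:ℝ) - (m:ℝ)) * (S k - S m) := by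
    intro m k hmk
    have h1 : P k - P m = ∑ i ∈ Finset.Ico m k, g i := by
      have := Finset.sum_range_add_sum_Ico g hmk
      simp only [hP]; linarith
    have h2 : S k - S m = ∑ i ∈ Finset.Ico m k, (g i)^2 := by
      have := Finset.sum_range_add_sum_Ico (fun i => (g i)^2) hmk
      simp only [hS]; linarith
    rw [h1, h2]
    have h3 := sq_sum_le_card_mul_sum_sq (s := Finset.Ico m k) (f := g)
    rwa [Nat.card_Ico, Nat.cast_sub hmk] at h3
  have key : ∀ m : ℕ, 1 ≤ m → 2 * m ≤ q → ε * N * Real.sqrt ((m:ℝ) / 2) < -P m := by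
    intro m h1 h2
    have hmq : m ≤ q - 1 := by omega
    have hlt := hcon m h1 hmq
    have hm0 : (0:ℝ) < m := by exact_mod_cast h1
    have hqm : (0:ℝ) < (q:ℝ) - m := by
      have : m < q := by omega
      exact sub_pos.mpr (by exact_mod_cast this)
    have hPm : 0 ≤ -P m := neg_nonneg.mpr (hPle m (by omega))
    have h2m : 2 * (m:ℝ) ≤ (q:ℝ) := by exact_mod_cast h2
    have hcle : Real.sqrt ((q:ℝ) / ((m:ℝ) * ((q:ℝ) - (m:ℝ)))) ≤ Real.sqrt (2 / (m:ℝ)) := by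
      apply Real.sqrt_le_sqrt
      rw [div_le_div_iff₀ (by positivity) hm0]
      nlinarith [mul_nonneg hm0.le (sub_nonneg.mpr h2m)]
    have hstep : ε * N < (-P m) * Real.sqrt (2 / (m:ℝ)) :=
      lt_of_lt_of_le hlt (mul_le_mul_of_nonneg_left hcle hPm)
    have hs2 : Real.sqrt (2/(m:ℝ)) * Real.sqrt ((m:ℝ)/2) = 1 := by
      rw [← Real.sqrt_mul (by positivity)]
      rw [show (2/(m:ℝ)) * ((m:ℝ)/2) = 1 by field_simp]
      exact Real.sqrt_one
    have hsp : 0 < Real.sqrt ((m:ℝ)/2) := Real.sqrt_pos.mpr (by positivity)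
    calc ε * N * Real.sqrt ((m:ℝ)/2) < (-P m) * Real.sqrt (2/(m:ℝ)) * Real.sqrt ((m:ℝ)/2) :=
          mul_lt_mul_of_pos_right hstep hsp
    _ = -P m := by rw [mul_assoc, hs2, mul_one]
  have claim : ∀ j : ℕ, 2 * r ^ j ≤ q → ((j:ℝ) + 1) * (ε^2 * N^2 / 8) ≤ S (r ^ j) := by
    intro j
    induction j with
    | zero =>
      intro hj
      simp only [pow_zero] at hj ⊢
      have h1 := key 1 le_rfl (by simpa using hj)
      push_cast at h1
      have hnn : 0 ≤ ε * N * Real.sqrt ((1:ℝ)/2) := by positivity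
      have hsq : (ε * N * Real.sqrt ((1:ℝ)/2))^2 ≤ (-P 1)^2 :=
        pow_le_pow_left₀ hnn h1.le 2
      have hval : (ε * N * Real.sqrt ((1:ℝ)/2))^2 = ε^2 * N^2 / 2 := by
        rw [mul_pow, mul_pow, Real.sq_sqrt (by norm_num : (0:ℝ) ≤ 1/2)]
        ring
      have hP1 : (-P 1)^2 = S 1 := by simp [hP, hS]
      rw [hval, hP1] at hsq
      push_cast
      nlinarith [hsq, sq_nonneg (ε*N)]
    | succ j ih =>
      intro hj
      have hrmono : r ^ j ≤ r ^ (j+1) := Nat.pow_le_pow_right (by omega) (Nat.le_succ j)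
      have hrj : 2 * r ^ j ≤ q := le_trans (by omega) hj
      have hQm := ih hrj
      set m := r ^ j with hm
      set k := r ^ (j + 1) with hk
      have hmk : m ≤ k := hrmono
      have hm1 : 1 ≤ m := Nat.one_le_pow _ _ (by omega)
      have hkq : 2 * k ≤ q := hj
      have hkey := key k (le_trans hm1 hmk) hkq
      have hPm2 : (P m)^2 ≤ (m:ℝ) * S m := by
        have := hCS 0 m (Nat.zero_le m)
        simpa [hP, hS] using this
      have hPmle : -P m ≤ Real.sqrt (m:ℝ) * N := by
        have h1 : (P m)^2 ≤ (Real.sqrt (m:ℝ) * N)^2 := by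
          rw [mul_pow, Real.sq_sqrt (Nat.cast_nonneg m)]
          calc (P m)^2 ≤ (m:ℝ) * S m := hPm2
          _ ≤ (m:ℝ) * N^2 := mul_le_mul_of_nonneg_left (hSN m (by omega)) (Nat.cast_nonneg m)
        have h2 : Real.sqrt ((P m)^2) ≤ Real.sqrt ((Real.sqrt (m:ℝ) * N)^2) := Real.sqrt_le_sqrt h1
        rwa [Real.sqrt_sq_eq_abs, Real.sqrt_sq (by positivity),
          abs_of_nonpos (hPle m (by omega))] at h2
      have hkm : (k:ℝ) = (m:ℝ) * (r:ℝ) := by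
        rw [hk, hm, pow_succ]; push_cast; ring
      have hsqrtk : Real.sqrt ((k:ℝ)/2) = Real.sqrt (m:ℝ) * Real.sqrt ((r:ℝ)/2) := by
        rw [hkm, show (m:ℝ) * r / 2 = m * (r/2) by ring, Real.sqrt_mul (Nat.cast_nonneg m)]
      have hεr : 2 ≤ ε * Real.sqrt ((r:ℝ)/2) := by
        have h1 : (2:ℝ)^2 ≤ (ε * Real.sqrt ((r:ℝ)/2))^2 := by
          rw [mul_pow, Real.sq_sqrt (by positivity)]
          nlinarith [hrε]
        nlinarith [mul_nonneg hε.le (Real.sqrt_nonneg ((r:ℝ)/2)), h1]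
      have hgap : ε * N * Real.sqrt ((k:ℝ)/2) / 2 ≤ P m - P k := by
        have h2 : Real.sqrt (m:ℝ) * N ≤ ε * N * Real.sqrt ((k:ℝ)/2) / 2 := by
          rw [hsqrtk]
          nlinarith [mul_nonneg (mul_nonneg (Real.sqrt_nonneg ((m:ℝ))) hN.le)
            (sub_nonneg.mpr hεr)]
        linarith [hkey, hPmle]
      have hk0 : (0:ℝ) < (k:ℝ) := by
        have : 1 ≤ k := le_trans hm1 hmk
        exact_mod_cast this
      have hCSmk := hCS m k hmk
      have hgap2 : ε^2 * N^2 * (k:ℝ) / 8 ≤ (P k - P m)^2 := by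
        have h0 : 0 ≤ ε * N * Real.sqrt ((k:ℝ)/2) / 2 := by positivity
        have hval : (ε * N * Real.sqrt ((k:ℝ)/2) / 2)^2 = ε^2 * N^2 * (k:ℝ) / 8 := by
          rw [div_pow, mul_pow, mul_pow, Real.sq_sqrt (by positivity)]
          ring
        calc ε^2*N^2*(k:ℝ)/8 = (ε * N * Real.sqrt ((k:ℝ)/2)/2)^2 := hval.symm
        _ ≤ (P m - P k)^2 := pow_le_pow_left₀ h0 hgap 2
        _ = (P k - P m)^2 := by ring
      have hSgap : ε^2 * N^2 / 8 ≤ S k - S m := by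
        have h1 : ε^2*N^2*(k:ℝ)/8 ≤ ((k:ℝ) - (m:ℝ)) * (S k - S m) := le_trans hgap2 hCSmk
        have hnn : 0 ≤ S k - S m := sub_nonneg.mpr (hSmono m k hmk)
        have h2 : ((k:ℝ) - (m:ℝ)) * (S k - S m) ≤ (k:ℝ) * (S k - S m) :=
          mul_le_mul_of_nonneg_right
            (by linarith [Nat.cast_nonneg (α := ℝ) m]) hnn
        have h3 : (k:ℝ) * (ε^2*N^2/8) ≤ (k:ℝ) * (S k - S m) := by
          have h4 : (k:ℝ) * (ε^2*N^2/8) = ε^2*N^2*(k:ℝ)/8 := by ring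
          rw [h4]
          exact le_trans h1 h2
        exact le_of_mul_le_mul_left h3 hk0
      push_cast
      push_cast at hQm
      linarith
  have hfin := claim r hq
  have hrrq : r ^ r ≤ q := le_trans (by omega) hq
  have hSr : S (r ^ r) ≤ N ^ 2 := hSN _ hrrq
  have hN2pos : 0 < N^2 := by positivity
  nlinarith [mul_le_mul_of_nonneg_right hrε hN2pos.le,
    mul_pos (mul_pos (pow_pos hε 2) hN2pos) hN2pos, mul_pos (pow_pos hε 2) hN2pos]

noncomputable def gfun (q : ℕ) (y : EuclideanSpace ℝ (Fin q)) : ℕ → ℝ :=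
  fun n => if h : n < q then y ⟨n, h⟩ else 0

lemma sum_range_g {q : ℕ} (y : EuclideanSpace ℝ (Fin q)) :
    ∑ n ∈ Finset.range q, gfun q y n = ∑ i, y i := by
  rw [← Fin.sum_univ_eq_sum_range (fun n => gfun q y n) q]
  exact Finset.sum_congr rfl fun i _ => by simp [gfun, i.isLt]

lemma sum_range_g_sq {q : ℕ} (y : EuclideanSpace ℝ (Fin q)) :
    ∑ n ∈ Finset.range q, (gfun q y n)^2 = ∑ i, (y i)^2 := by
  rw [← Fin.sum_univ_eq_sum_range (fun n => (gfun q y n)^2) q]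
  exact Finset.sum_congr rfl fun i _ => by simp [gfun, i.isLt]

lemma norm_sq_eq {q : ℕ} (y : EuclideanSpace ℝ (Fin q)) :
    ‖y‖^2 = ∑ i, (y i)^2 := by
  rw [EuclideanSpace.norm_eq, Real.sq_sqrt (by positivity)]
  exact Finset.sum_congr rfl fun i _ => by rw [Real.norm_eq_abs, sq_abs]

lemma zinner_sum {q m : ℕ} (hm1 : 1 ≤ m) (hm2 : m ≤ q - 1) (hq : 2 ≤ q)
    (y : EuclideanSpace ℝ (Fin q)) (hsum : ∑ i, y i = 0) :
    ∑ i, y i * zvec q m i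
      = (-∑ i ∈ Finset.range m, gfun q y i) *
        Real.sqrt ((q : ℝ) / ((m : ℝ) * ((q:ℝ) - (m:ℝ)))) := by
  have hmq : m ≤ q := by omega
  have hm0 : (0:ℝ) < m := by exact_mod_cast hm1
  have hqm : (m:ℝ) < q := by exact_mod_cast (show m < q by omega)
  set a : ℝ := Real.sqrt (((q:ℝ) - m) / (q * m)) with hadef
  set b : ℝ := Real.sqrt ((m:ℝ) / (q * ((q:ℝ) - m))) with hbdef
  have hzero : ∑ n ∈ Finset.range q, gfun q y n = 0 := by rw [sum_range_g y, hsum]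
  set F : ℕ → ℝ := fun n => gfun q y n * (if n < m then -a else b) with hF
  have step1 : ∑ i, y i * zvec q m i = ∑ n ∈ Finset.range q, F n := by
    rw [← Fin.sum_univ_eq_sum_range F q]
    refine Finset.sum_congr rfl fun i _ => ?_
    simp only [hF, gfun, zvec, i.isLt, dif_pos, PiLp.toLp_apply]
    rfl
  have step2 : ∑ n ∈ Finset.range q, F n
      = (-a - b) * ∑ n ∈ Finset.range m, gfun q y n := by
    rw [← Finset.sum_range_add_sum_Ico F hmq]
    have e1 : ∑ n ∈ Finset.range m, F n = (-a) * ∑ n ∈ Finset.range m, gfun q y n := by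
      rw [Finset.mul_sum]
      refine Finset.sum_congr rfl fun n hn => ?_
      rw [Finset.mem_range] at hn
      simp [hF, hn, mul_comm]
    have e2 : ∑ n ∈ Finset.Ico m q, F n = b * ∑ n ∈ Finset.Ico m q, gfun q y n := by
      rw [Finset.mul_sum]
      refine Finset.sum_congr rfl fun n hn => ?_
      rw [Finset.mem_Ico] at hn
      simp [hF, Nat.not_lt.mpr hn.1, mul_comm]
    have e3 : ∑ n ∈ Finset.Ico m q, gfun q y n = - ∑ n ∈ Finset.range m, gfun q y n := by
      have := Finset.sum_range_add_sum_Ico (gfun q y) hmq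
      rw [hzero] at this; linarith
    rw [e1, e2, e3]; ring
  have habs : a + b = Real.sqrt ((q : ℝ) / ((m : ℝ) * ((q:ℝ) - (m:ℝ)))) :=
    sqrt_add_aux hm0 hqm
  rw [step1, step2, ← habs]
  ring

lemma master (ε : ℝ) (hε : 0 < ε) : ∃ Q : ℕ, 2 ≤ Q ∧ ∀ q : ℕ, Q ≤ q →
    ∀ y : EuclideanSpace ℝ (Fin q), y ≠ 0 → (∀ i j : Fin q, i ≤ j → y i ≤ y j) →
    (∑ i, y i = 0) →
    0 ≤ (1 / ‖y‖) * ⨅ k : Fin (q - 1), ∑ i, y i * zvec q ((k : ℕ) + 1) i ∧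
    (1 / ‖y‖) * (⨅ k : Fin (q - 1), ∑ i, y i * zvec q ((k : ℕ) + 1) i) ≤ ε := by
  obtain ⟨Q, hQ2, hKey⟩ := keyAbstract ε hε
  refine ⟨Q, hQ2, ?_⟩
  intro q hq y hy0 hmono hsum
  have hq2 : 2 ≤ q := le_trans hQ2 hq
  have hgmono : ∀ i j, i ≤ j → j < q → gfun q y i ≤ gfun q y j := by
    intro i j hij hj
    have hi : i < q := lt_of_le_of_lt hij hj
    simp only [gfun, dif_pos hi, dif_pos hj]
    exact hmono ⟨i, hi⟩ ⟨j, hj⟩ hij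
  have hgsum : ∑ n ∈ Finset.range q, gfun q y n = 0 := by rw [sum_range_g y, hsum]
  have hN : 0 < ‖y‖ := norm_pos_iff.mpr hy0
  have hN2 : ‖y‖^2 = ∑ n ∈ Finset.range q, (gfun q y n)^2 := by
    rw [norm_sq_eq y, ← sum_range_g_sq y]
  obtain ⟨m, hm1, hm2, hmle⟩ := hKey q hq (gfun q y) hgmono hgsum ‖y‖ hN hN2
  have hne : Nonempty (Fin (q-1)) := ⟨⟨0, by omega⟩⟩
  have hnonneg : ∀ k : Fin (q-1), 0 ≤ ∑ i, y i * zvec q ((k:ℕ)+1) i := by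
    intro k
    have hk2 : (k:ℕ)+1 ≤ q - 1 := k.isLt
    rw [zinner_sum (Nat.le_add_left 1 _) hk2 hq2 y hsum]
    apply mul_nonneg
    · rw [neg_nonneg]
      exact prefix_nonpos hgmono hgsum (by omega)
    · exact Real.sqrt_nonneg _
  have hbdd : BddBelow (Set.range (fun k : Fin (q-1) => ∑ i, y i * zvec q ((k:ℕ)+1) i)) :=
    ⟨0, by rintro x ⟨k, rfl⟩; exact hnonneg k⟩
  have hinf0 : 0 ≤ ⨅ k : Fin (q-1), ∑ i, y i * zvec q ((k:ℕ)+1) i := le_ciInf hnonneg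
  have hinfle : (⨅ k : Fin (q-1), ∑ i, y i * zvec q ((k:ℕ)+1) i) ≤ ε * ‖y‖ := by
    have hkidx : m - 1 < q - 1 := by omega
    refine ciInf_le_of_le hbdd ⟨m-1, hkidx⟩ ?_
    have hco : ((⟨m - 1, hkidx⟩ : Fin (q-1)) : ℕ) + 1 = m := by
      simp [Nat.sub_add_cancel hm1]
    rw [hco, zinner_sum hm1 hm2 hq2 y hsum]
    exact hmle
  constructor
  · exact mul_nonneg (by positivity) hinf0
  · have h1 : (1/‖y‖) * (⨅ k : Fin (q-1), ∑ i, y i * zvec q ((k:ℕ)+1) i)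
        ≤ (1/‖y‖) * (ε * ‖y‖) := mul_le_mul_of_nonneg_left hinfle (by positivity)
    rwa [show (1/‖y‖) * (ε * ‖y‖) = ε by field_simp] at h1

lemma witness (q : ℕ) (hq : 2 ≤ q) :
    ∃ w : EuclideanSpace ℝ (Fin q), w ≠ 0 ∧ (∀ i j : Fin q, i ≤ j → w i ≤ w j) ∧
      (∑ i, w i = 0) := by
  refine ⟨WithLp.toLp 2 (fun i : Fin q => (i:ℝ) - ((q:ℝ)-1)/2), ?_, ?_, ?_⟩
  · intro h
    have h0 : ((⟨0, by omega⟩ : Fin q) : ℝ) - ((q:ℝ)-1)/2 = 0 := congrArg (fun v : EuclideanSpace ℝ (Fin q) => v ⟨0, by omega⟩) h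
    have hqr : (2:ℝ) ≤ q := by exact_mod_cast hq
    norm_num at h0
    linarith
  · intro i j hij
    have : ((i:ℕ):ℝ) ≤ ((j:ℕ):ℝ) := by exact_mod_cast (show (i:ℕ) ≤ (j:ℕ) from hij)
    simpa using this
  · have hsum1 : ∑ i : Fin q, ((i:ℕ):ℝ) = (q:ℝ) * ((q:ℝ)-1)/2 := by
      rw [Fin.sum_univ_eq_sum_range (fun n => (n:ℝ)) q]
      have h2 := Finset.sum_range_id_mul_two q
      have h3 : ((∑ i ∈ Finset.range q, i : ℕ) : ℝ) * 2 = ((q * (q-1) : ℕ) : ℝ) := by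
        exact_mod_cast congrArg (Nat.cast : ℕ → ℝ) h2
      rw [Nat.cast_mul, Nat.cast_sub (by omega : 1 ≤ q), Nat.cast_one] at h3
      rw [show ∑ i ∈ Finset.range q, ((i:ℕ):ℝ) = ((∑ i ∈ Finset.range q, i : ℕ) : ℝ) from
        (Nat.cast_sum _ _).symm]
      linarith
    have : ∑ i : Fin q, (((i:ℕ):ℝ) - ((q:ℝ)-1)/2)
        = (∑ i : Fin q, ((i:ℕ):ℝ)) - (q:ℝ) * (((q:ℝ)-1)/2) := by
      rw [Finset.sum_sub_distrib, Finset.sum_const, Finset.card_univ, Fintype.card_fin]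
      push_cast
      ring
    rw [show (∑ i, ((WithLp.toLp 2 (fun i : Fin q => (i:ℝ) - ((q:ℝ)-1)/2) : EuclideanSpace ℝ (Fin q)) i))
        = ∑ i : Fin q, (((i:ℕ):ℝ) - ((q:ℝ)-1)/2) from rfl, this, hsum1]
    ring

end Stmt17Aux

/-- Proposition 6.1: `sup { (1/‖y‖) min_{1≤k≤q-1} ⟨y, z_k^q⟩ : 0 ≠ y ∈ M̃_≤^{q-1} } → 0` as
`q → ∞`; equivalently, for every sequence of nonzero `y^q ∈ M̃_≤^{q-1}` the largest empty cap
angular discrepancy `A^{q-2}(Π(y^q)) = arccos((1/‖y^q‖) min_k ⟨y^q, z_k^q⟩)` tends to `π/2`.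
Hence no asymptotically permutation-dense sequence exists. -/
theorem stmt17 :
    Tendsto
      (fun q : ℕ => sSup {c : ℝ | ∃ y : EuclideanSpace ℝ (Fin q), y ≠ 0 ∧
        (∀ i j : Fin q, i ≤ j → y i ≤ y j) ∧ (∑ i, y i = 0) ∧
        c = (1 / ‖y‖) * ⨅ k : Fin (q - 1), ∑ i, y i * zvec q ((k : ℕ) + 1) i})
      atTop (nhds 0) ∧
    ∀ y : (q : ℕ) → EuclideanSpace ℝ (Fin q),
      (∀ q, 2 ≤ q → y q ≠ 0 ∧ (∀ i j : Fin q, i ≤ j → y q i ≤ y q j) ∧ (∑ i, y q i = 0)) →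
      Tendsto
        (fun q : ℕ =>
          Real.arccos ((1 / ‖y q‖) * ⨅ k : Fin (q - 1), ∑ i, y q i * zvec q ((k : ℕ) + 1) i))
        atTop (nhds (Real.pi / 2)) := by
  constructor
  · rw [Metric.tendsto_atTop]
    intro ε hε
    obtain ⟨Q, hQ2, hQ⟩ := Stmt17Aux.master (ε/2) (by linarith)
    refine ⟨Q, fun q hq => ?_⟩
    have hq2 : 2 ≤ q := le_trans hQ2 hq
    set S : Set ℝ := {c : ℝ | ∃ y : EuclideanSpace ℝ (Fin q), y ≠ 0 ∧
        (∀ i j : Fin q, i ≤ j → y i ≤ y j) ∧ (∑ i, y i = 0) ∧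
        c = (1 / ‖y‖) * ⨅ k : Fin (q - 1), ∑ i, y i * zvec q ((k : ℕ) + 1) i} with hSdef
    have hub : ∀ c ∈ S, c ≤ ε/2 := by
      rintro c ⟨y, hy0, hmono, hsum, rfl⟩
      exact (hQ q hq y hy0 hmono hsum).2
    have hbdd : BddAbove S := ⟨ε/2, hub⟩
    obtain ⟨w, hw0, hwmono, hwsum⟩ := Stmt17Aux.witness q hq2
    have hcmem : (1 / ‖w‖) * (⨅ k : Fin (q - 1), ∑ i, w i * zvec q ((k : ℕ) + 1) i) ∈ S :=
      ⟨w, hw0, hwmono, hwsum, rfl⟩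
    have hlb : 0 ≤ sSup S :=
      le_trans (hQ q hq w hw0 hwmono hwsum).1 (le_csSup hbdd hcmem)
    have hub' : sSup S ≤ ε/2 := Real.sSup_le hub (by linarith)
    rw [Real.dist_eq, sub_zero, abs_of_nonneg hlb]
    linarith
  · intro y hy
    have h0 : Tendsto (fun q : ℕ =>
        (1 / ‖y q‖) * ⨅ k : Fin (q - 1), ∑ i, y q i * zvec q ((k : ℕ) + 1) i)
        atTop (nhds 0) := by
      rw [Metric.tendsto_atTop]
      intro ε hε
      obtain ⟨Q, hQ2, hQ⟩ := Stmt17Aux.master (ε/2) (by linarith)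
      refine ⟨Q, fun q hq => ?_⟩
      obtain ⟨h1, h2, h3⟩ := hy q (le_trans hQ2 hq)
      obtain ⟨ha, hb⟩ := hQ q hq (y q) h1 h2 h3
      rw [Real.dist_eq, sub_zero, abs_of_nonneg ha]
      linarith
    have hc := (Real.continuous_arccos.tendsto 0).comp h0
    rw [Real.arccos_zero] at hc
    exact hc
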